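/- arXiv:1503.07432 — 7 statements merged into one kernel-verified Lean document; each statement's English description precedes it below -/
import Mathlib

section
/- For the sequence b̃ defined by b̃_0 = 5, b̃_1 = 5, b̃_n = 4b̃_{n-1} - b̃_{n-2}, and its associate sequence B̃ with B̃_1 = 10, B̃_2 = 50 (same recurrence), the identity B̃_n² - 12 b̃_n² = -200 holds for all n ≥ 1. -/
/-!
Both sequences satisfy `u (n + 2) = 4 * u (n + 1) - u n`. For such a recurrence the quadratic form
`u (n + 1) ^ 2 - 4 * u (n + 1) * u n + u n ^ 2` is constant, equal to `-50` for `b`. Since the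
solutions form a module and are determined by two initial values, `B (n + 1) = b (n + 2) - b n`,
i.e. `B (n + 1) = 4 * b (n + 1) - 2 * b n`, and then `B (n + 1) ^ 2 - 12 * b (n + 1) ^ 2` is four
times the invariant.
-/

namespace LinearRecurrence

variable {R : Type*} [CommRing R]

/-- The recurrence `u (n + 2) = a * u (n + 1) - u n`, with characteristic polynomial `X² - a X + 1`. -/
def chebyshev (a : R) : LinearRecurrence R := ⟨2, ![-1, a]⟩

theorem isSolution_chebyshev_iff {a : R} {u : ℕ → R} :
    (chebyshev a).IsSolution u ↔ ∀ n, u (n + 2) = a * u (n + 1) - u n := by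
  refine forall_congr' fun n => ?_
  change u (n + 2) = ∑ i : Fin 2, ![-1, a] i * u (n + i) ↔ _
  simp [Fin.sum_univ_two, neg_add_eq_sub]

theorem IsSolution.comp_add_right {E : LinearRecurrence R} {u : ℕ → R} (h : E.IsSolution u)
    (k : ℕ) : E.IsSolution fun n => u (n + k) := by
  intro n
  simpa only [add_right_comm _ k] using h (n + k)

theorem IsSolution.chebyshev_quadratic_invariant {a : R} {u : ℕ → R}
    (h : (chebyshev a).IsSolution u) (n : ℕ) :
    u (n + 1) ^ 2 - a * u (n + 1) * u n + u n ^ 2 = u 1 ^ 2 - a * u 1 * u 0 + u 0 ^ 2 := by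
  induction n with
  | zero => rfl
  | succ n ih =>
    rw [isSolution_chebyshev_iff.1 h n, ← ih]
    ring

end LinearRecurrence

open LinearRecurrence

theorem stmt_4 (b B : ℕ → ℤ) (hb0 : b 0 = 5) (hb1 : b 1 = 5)
    (hb : ∀ n : ℕ, b (n + 2) = 4 * b (n + 1) - b n)
    (hB1 : B 1 = 10) (hB2 : B 2 = 50)
    (hB : ∀ n : ℕ, B (n + 3) = 4 * B (n + 2) - B (n + 1)) :
    ∀ n : ℕ, 1 ≤ n → B n ^ 2 - 12 * b n ^ 2 = -200 := by
  have hbSol : (chebyshev (4 : ℤ)).IsSolution b := isSolution_chebyshev_iff.2 hb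
  have hBSol : (chebyshev (4 : ℤ)).IsSolution fun n => B (n + 1) :=
    isSolution_chebyshev_iff.2 hB
  have hB_eq : (fun n => B (n + 1)) = fun n => b (n + 2) - b n := by
    refine ((chebyshev (4 : ℤ)).eq_iff_eqOn_range_order _ _ hBSol
      ((chebyshev (4 : ℤ)).solSpace.sub_mem (hbSol.comp_add_right 2) hbSol)).2 ?_
    intro n hn
    have hb2 := hb 0
    have hb3 := hb 1
    simp only [chebyshev, Finset.coe_range, Set.mem_Iio] at hn
    interval_cases n <;> simp_all
  intro n hn
  obtain ⟨m, rfl⟩ := Nat.exists_eq_add_of_le' hn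
  have hinv := hbSol.chebyshev_quadratic_invariant m
  rw [hb0, hb1] at hinv
  rw [congrFun hB_eq m, hb m]
  linear_combination 4 * hinv
end

section
/- No term ã_n (n ≥ 1) of the sequence ã_1 = 5, ã_2 = 25, ã_n = 4ã_{n-1} - ã_{n-2} is divisible by 7, 11, 13, or 17. -/
/-!
Modulo `m`, consecutive pairs `(ã_n, ã_{n+1})` evolve under the invertible map
`(x, y) ↦ (y, 4y - x)` on `(ℤ/m)²`, so the orbit of `(5, 25)` is periodic. It therefore
suffices to check that no first coordinate along one period vanishes, which is a finite
computation for each of `m = 7, 11, 13, 17` (periods `8, 10, 12, 18`).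
-/

open Function

def recStep {R : Type*} [Ring R] (c : R) (p : R × R) : R × R :=
  (p.2, c * p.2 - p.1)

lemma intCast_pair_eq_iterate_recStep {R : Type*} [Ring R] (b : ℕ → ℤ) (c : ℤ)
    (hb : ∀ n, b (n + 2) = c * b (n + 1) - b n) (n : ℕ) :
    ((b n : R), (b (n + 1) : R)) = (recStep (c : R))^[n] ((b 0 : R), (b 1 : R)) := by
  induction n with
  | zero => rfl
  | succ k ih =>
    rw [iterate_succ_apply', ← ih, recStep, hb k]
    push_cast
    rfl

lemma not_dvd_of_isPeriodicPt_recStep (b : ℕ → ℤ) (c : ℤ)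
    (hb : ∀ n, b (n + 2) = c * b (n + 1) - b n) (m T : ℕ) (hT : 0 < T)
    (hper : IsPeriodicPt (recStep (c : ZMod m)) T ((b 0 : ZMod m), (b 1 : ZMod m)))
    (hne : ∀ k < T, ((recStep (c : ZMod m))^[k] ((b 0 : ZMod m), (b 1 : ZMod m))).1 ≠ 0)
    (n : ℕ) : ¬ (m : ℤ) ∣ b n := by
  rw [← ZMod.intCast_zmod_eq_zero_iff_dvd]
  have hpair : (b n : ZMod m) = ((recStep (c : ZMod m))^[n] ((b 0 : ZMod m), (b 1 : ZMod m))).1 :=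
    congrArg Prod.fst (intCast_pair_eq_iterate_recStep b c hb n)
  rw [hpair, ← hper.iterate_mod_apply]
  exact hne _ (Nat.mod_lt n hT)

theorem stmt_7 (a : ℕ → ℤ) (ha1 : a 1 = 5) (ha2 : a 2 = 25)
    (ha : ∀ n : ℕ, a (n + 3) = 4 * a (n + 2) - a (n + 1)) :
    ∀ n : ℕ, 1 ≤ n → ¬ (7 ∣ a n) ∧ ¬ (11 ∣ a n) ∧ ¬ (13 ∣ a n) ∧ ¬ (17 ∣ a n) := by
  intro n hn
  obtain ⟨k, rfl⟩ : ∃ k, n = k + 1 := ⟨n - 1, by omega⟩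
  have hb : ∀ n, a (n + 1 + 2) = 4 * a (n + 1 + 1) - a (n + 1) := ha
  have key := not_dvd_of_isPeriodicPt_recStep (fun n ↦ a (n + 1)) 4 hb
  simp only [zero_add, ha1, Nat.reduceAdd, ha2] at key
  exact ⟨key 7 8 (by norm_num) (by decide) (by decide) k,
    key 11 10 (by norm_num) (by decide) (by decide) k,
    key 13 12 (by norm_num) (by decide) (by decide) k,
    key 17 18 (by norm_num) (by decide) (by decide) k⟩
end

section
/- No term b̃_n (n ≥ 1) of the sequence b̃_1 = 5, b̃_2 = 15, b̃_n = 4b̃_{n-1} - b̃_{n-2} is divisible by 2, 7, 13, 19, or 23. -/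
/-! Modulo a prime `p` the pairs `(b̃ₙ, b̃ₙ₊₁)` are the orbit of `(5, 15)` under the invertible map
`(x, y) ↦ (y, 4y - x)` of the finite set `(ZMod p)²`, so the orbit is a cycle. For each of the five
primes it suffices to run once around that cycle (of length 1, 8, 12, 5, 11) and see no zero. -/

open Function

def recurrenceStep {R : Type*} [Ring R] (a : R) (v : R × R) : R × R := (v.2, a * v.2 - v.1)

section Recurrence

variable {R : Type*} [Ring R] {a : R} {u : ℕ → R}

theorem pair_eq_iterate_recurrenceStep (hu : ∀ n, u (n + 2) = a * u (n + 1) - u n) (n : ℕ) :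
    (u n, u (n + 1)) = (recurrenceStep a)^[n] (u 0, u 1) := by
  induction n with
  | zero => rfl
  | succ n ih => rw [iterate_succ_apply', ← ih, recurrenceStep, hu]

theorem ne_zero_of_isPeriodicPt_recurrenceStep (hu : ∀ n, u (n + 2) = a * u (n + 1) - u n)
    {T : ℕ} (hT : 0 < T) (hper : IsPeriodicPt (recurrenceStep a) T (u 0, u 1))
    (hne : ∀ k < T, ((recurrenceStep a)^[k] (u 0, u 1)).1 ≠ 0) (n : ℕ) : u n ≠ 0 := by
  have h : ((recurrenceStep a)^[n % T] (u 0, u 1)).1 = u n := by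
    rw [hper.iterate_mod_apply, ← pair_eq_iterate_recurrenceStep hu]
  exact h ▸ hne (n % T) (Nat.mod_lt n hT)

end Recurrence

theorem not_dvd_of_isPeriodicPt (b : ℕ → ℤ) (hb1 : b 1 = 5) (hb2 : b 2 = 15)
    (hb : ∀ n : ℕ, b (n + 3) = 4 * b (n + 2) - b (n + 1)) (p : ℕ) {T : ℕ} (hT : 0 < T)
    (hper : IsPeriodicPt (recurrenceStep (4 : ZMod p)) T (5, 15))
    (hne : ∀ k < T, ((recurrenceStep (4 : ZMod p))^[k] (5, 15)).1 ≠ 0)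
    {n : ℕ} (hn : 1 ≤ n) : ¬ (p : ℤ) ∣ b n := by
  obtain ⟨n, rfl⟩ := Nat.exists_eq_add_of_le' hn
  rw [← ZMod.intCast_zmod_eq_zero_iff_dvd]
  have hu : ∀ k, (b (k + 2 + 1) : ZMod p) = 4 * (b (k + 1 + 1) : ZMod p) - (b (k + 1) : ZMod p) :=
    fun k => by rw [hb k]; push_cast; ring
  have h01 : ((b (0 + 1) : ZMod p), (b (0 + 1 + 1) : ZMod p)) = (5, 15) := by
    rw [hb1, hb2]; push_cast; rfl
  exact ne_zero_of_isPeriodicPt_recurrenceStep (u := fun k => (b (k + 1) : ZMod p)) hu hT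
    (h01 ▸ hper) (h01 ▸ hne) n

theorem stmt_8 (b : ℕ → ℤ) (hb1 : b 1 = 5) (hb2 : b 2 = 15)
    (hb : ∀ n : ℕ, b (n + 3) = 4 * b (n + 2) - b (n + 1)) :
    ∀ n : ℕ, 1 ≤ n →
      ¬ (2 ∣ b n) ∧ ¬ (7 ∣ b n) ∧ ¬ (13 ∣ b n) ∧ ¬ (19 ∣ b n) ∧ ¬ (23 ∣ b n) := by
  intro n hn
  refine ⟨?_, ?_, ?_, ?_, ?_⟩
  · exact_mod_cast not_dvd_of_isPeriodicPt b hb1 hb2 hb 2 (T := 1) one_pos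
      (by decide) (by decide) hn
  · exact_mod_cast not_dvd_of_isPeriodicPt b hb1 hb2 hb 7 (T := 8) (by norm_num)
      (by decide) (by decide) hn
  · exact_mod_cast not_dvd_of_isPeriodicPt b hb1 hb2 hb 13 (T := 12) (by norm_num)
      (by decide) (by decide) hn
  · exact_mod_cast not_dvd_of_isPeriodicPt b hb1 hb2 hb 19 (T := 5) (by norm_num)
      (by decide) (by decide) hn
  · exact_mod_cast not_dvd_of_isPeriodicPt b hb1 hb2 hb 23 (T := 11) (by norm_num)
      (by decide) (by decide) hn
end

section
/- If x = a_k for some k ≥ 1, then there exists a positive integer y with y² - (κ² - 4)x² = 4(κ+2)q², where κ = (p-2)(q-2) - 2. -/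
/-!
For a sequence with `a (n + 2) = κ a (n + 1) - a n`, the binary quadratic form
`a (n + 1)² - κ a (n + 1) a n + a n²` is the same for every `n`; for `a 0 = -q`, `a 1 = q` it
equals `(κ + 2) q²`. Completing the square, the associate sequence `A n = 2 a (n + 1) - κ a n`
satisfies `A n² - (κ² - 4) a n² = 4 (κ + 2) q²`, and `y = |A k|` works: `A k ≠ 0` because
`κ² - 4 ≥ 0` and the right-hand side is positive.
-/

section Recurrence

variable {R : Type*} [CommRing R] (κ : R) (a : ℕ → R)

theorem recurrence_form_eq (ha : ∀ n, a (n + 2) = κ * a (n + 1) - a n) (n : ℕ) :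
    a (n + 1) ^ 2 - κ * a (n + 1) * a n + a n ^ 2 = a 1 ^ 2 - κ * a 1 * a 0 + a 0 ^ 2 := by
  induction n with
  | zero => rfl
  | succ m ih =>
    rw [← ih, ha m]
    ring

theorem associate_sq_sub_eq (ha : ∀ n, a (n + 2) = κ * a (n + 1) - a n) (n : ℕ) :
    (2 * a (n + 1) - κ * a n) ^ 2 - (κ ^ 2 - 4) * a n ^ 2 =
      4 * (a 1 ^ 2 - κ * a 1 * a 0 + a 0 ^ 2) := by
  linear_combination 4 * recurrence_form_eq κ a ha n

end Recurrence

theorem ne_zero_of_sq_sub_mul_sq_eq_pos {R : Type*} [CommRing R] [LinearOrder R]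
    [IsStrictOrderedRing R] {y x d c : R} (hd : 0 ≤ d) (hc : 0 < c)
    (h : y ^ 2 - d * x ^ 2 = c) : y ≠ 0 := by
  rintro rfl
  nlinarith [mul_nonneg hd (sq_nonneg x)]

theorem stmt_11_general (p q : ℤ) (hq : 4 ≤ q) (hpq : 4 < (p - 2) * (q - 2))
    (a : ℕ → ℤ) (ha0 : a 0 = -q) (ha1 : a 1 = q)
    (ha : ∀ n : ℕ, a (n + 2) = ((p - 2) * (q - 2) - 2) * a (n + 1) - a n) :
    ∀ k : ℕ, 1 ≤ k → ∀ x : ℤ, x = a k →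
      ∃ y : ℤ, 0 < y ∧
        y ^ 2 - (((p - 2) * (q - 2) - 2) ^ 2 - 4) * x ^ 2 =
          4 * (((p - 2) * (q - 2) - 2) + 2) * q ^ 2 := by
  set κ : ℤ := (p - 2) * (q - 2) - 2
  intro k _ x hx
  have hκ : 2 < κ := by omega
  have key : (2 * a (k + 1) - κ * a k) ^ 2 - (κ ^ 2 - 4) * x ^ 2 = 4 * (κ + 2) * q ^ 2 := by
    rw [hx, associate_sq_sub_eq κ a ha k, ha0, ha1]
    ring
  have hA : 2 * a (k + 1) - κ * a k ≠ 0 :=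
    ne_zero_of_sq_sub_mul_sq_eq_pos (by nlinarith) (by positivity) key
  exact ⟨|2 * a (k + 1) - κ * a k|, abs_pos.mpr hA, by rw [sq_abs]; exact key⟩

theorem stmt_11 (p q : ℤ) (hp : 4 ≤ p) (hq : 4 ≤ q) (hpq : 4 < (p - 2) * (q - 2))
    (a : ℕ → ℤ) (ha0 : a 0 = -q) (ha1 : a 1 = q)
    (ha : ∀ n : ℕ, a (n + 2) = ((p - 2) * (q - 2) - 2) * a (n + 1) - a n) :
    ∀ k : ℕ, 1 ≤ k → ∀ x : ℤ, x = a k →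
      ∃ y : ℤ, 0 < y ∧
        y ^ 2 - (((p - 2) * (q - 2) - 2) ^ 2 - 4) * x ^ 2 =
          4 * (((p - 2) * (q - 2) - 2) + 2) * q ^ 2 :=
  stmt_11_general p q hq hpq a ha0 ha1 ha
end

section
/- If x = b_k for some k ≥ 1, then there exists an integer y with y² - (κ² - 4)x² = 4((p-3)² - κ(p-3) + 1)q², where κ = (p-2)(q-2) - 2. -/
/-! The binary form `u² - κuv + v²` is invariant under the step `(v, u) ↦ (u, κu - v)` of the
recurrence, so it takes the value `C_b` on every pair of consecutive terms; completing the square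
with `y = 2u - κv` rewrites `4(u² - κuv + v²)` as `y² - (κ² - 4)v²`. -/

section LinearRecurrence

variable {R : Type*} [CommRing R]

theorem sq_sub_mul_mul_add_sq_eq_of_recurrence (κ : R) (b : ℕ → R)
    (hb : ∀ n, b (n + 2) = κ * b (n + 1) - b n) (n : ℕ) :
    b (n + 1) ^ 2 - κ * b n * b (n + 1) + b n ^ 2 = b 1 ^ 2 - κ * b 0 * b 1 + b 0 ^ 2 := by
  induction n with
  | zero => rfl
  | succ m ih => rw [hb m]; linear_combination ih

theorem two_mul_sub_mul_sq_sub_mul_sq (κ u v : R) :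
    (2 * u - κ * v) ^ 2 - (κ ^ 2 - 4) * v ^ 2 = 4 * (u ^ 2 - κ * v * u + v ^ 2) := by
  ring

end LinearRecurrence

theorem stmt_12_general (p q : ℤ)
    (b : ℕ → ℤ) (hb0 : b 0 = q) (hb1 : b 1 = (p - 3) * q)
    (hb : ∀ n : ℕ, b (n + 2) = ((p - 2) * (q - 2) - 2) * b (n + 1) - b n) :
    ∀ k : ℕ, 1 ≤ k → ∀ x : ℤ, x = b k →
      ∃ y : ℤ,
        y ^ 2 - (((p - 2) * (q - 2) - 2) ^ 2 - 4) * x ^ 2 =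
          4 * ((p - 3) ^ 2 - ((p - 2) * (q - 2) - 2) * (p - 3) + 1) * q ^ 2 := by
  set κ : ℤ := (p - 2) * (q - 2) - 2
  rintro k - x rfl
  refine ⟨2 * b (k + 1) - κ * b k, ?_⟩
  rw [two_mul_sub_mul_sq_sub_mul_sq, sq_sub_mul_mul_add_sq_eq_of_recurrence κ b hb, hb0, hb1]
  ring

theorem stmt_12 (p q : ℤ) (hp : 4 ≤ p) (hq : 4 ≤ q) (hpq : 4 < (p - 2) * (q - 2))
    (b : ℕ → ℤ) (hb0 : b 0 = q) (hb1 : b 1 = (p - 3) * q)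
    (hb : ∀ n : ℕ, b (n + 2) = ((p - 2) * (q - 2) - 2) * b (n + 1) - b n) :
    ∀ k : ℕ, 1 ≤ k → ∀ x : ℤ, x = b k →
      ∃ y : ℤ,
        y ^ 2 - (((p - 2) * (q - 2) - 2) ^ 2 - 4) * x ^ 2 =
          4 * ((p - 3) ^ 2 - ((p - 2) * (q - 2) - 2) * (p - 3) + 1) * q ^ 2 :=
  stmt_12_general p q b hb0 hb1 hb
end

section
/- For q = 5 (so a_2 = 15(p-2) - 5) and the sequence ã_1 = 5, ã_2 = 25, ã_n = 4ã_{n-1} - ã_{n-2}: for every t ∈ ℕ one has ã_{2+2t} ≡ -5 (mod 15); consequently for each t ≥ 1 there exists an integer p ≥ 4 with a_2 = ã_{2+2t}, namely p = (ã_{2+2t} + 5)/15 + 2. -/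
/-!
Modulo 15 the recurrence `x (n + 2) = 4 x (n + 1) - x n` sends the pair `(c, -c)` to `(-c, c)`
whenever `15 ∣ 6c`, so the shifted sequence `a (n + 1)` alternates between `5` and `-5 ≡ 25`
modulo 15, and the even-indexed terms `a (2 + 2t)` are `≡ -5`. The sequence is also increasing
from `a 1 = 5`, so `a (2 + 2t) ≥ a 2 = 25`, which makes `p = (a (2 + 2t) + 5) / 15 + 2 ≥ 4`.
-/

theorem modEq_neg_one_pow_mul_of_recurrence {x : ℕ → ℤ}
    (hx : ∀ n, x (n + 2) = 4 * x (n + 1) - x n) {m c : ℤ} (hmc : m ∣ 6 * c)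
    (h0 : x 0 ≡ c [ZMOD m]) (h1 : x 1 ≡ -c [ZMOD m]) (n : ℕ) :
    x n ≡ (-1) ^ n * c [ZMOD m] := by
  induction n using Nat.twoStepInduction with
  | zero => simpa using h0
  | one => simpa using h1
  | more n ih₀ ih₁ =>
    have hzero : 6 * c ≡ 0 [ZMOD m] := (Int.modEq_zero_iff_dvd).2 hmc
    calc x (n + 2) = 4 * x (n + 1) - x n := hx n
      _ ≡ 4 * ((-1) ^ (n + 1) * c) - (-1) ^ n * c [ZMOD m] := (ih₁.mul_left 4).sub ih₀
      _ = (-1) ^ (n + 2) * c - (-1) ^ n * (6 * c) := by ring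
      _ ≡ (-1) ^ (n + 2) * c - (-1) ^ n * 0 [ZMOD m] :=
        (Int.ModEq.refl _).sub (hzero.mul_left _)
      _ = (-1) ^ (n + 2) * c := by ring

theorem monotone_of_recurrence {x : ℕ → ℤ}
    (hx : ∀ n, x (n + 2) = 4 * x (n + 1) - x n) (h0 : 0 ≤ x 0) (h01 : x 0 ≤ x 1) :
    Monotone x := by
  have key : ∀ n, 0 ≤ x n ∧ x n ≤ x (n + 1) := by
    intro n
    induction n with
    | zero => exact ⟨h0, h01⟩
    | succ n ih =>
      have := hx n
      constructor <;> linarith [ih.1, ih.2]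
  exact monotone_nat_of_le_succ fun n => (key n).2

theorem stmt_13 (a : ℕ → ℤ) (ha1 : a 1 = 5) (ha2 : a 2 = 25)
    (ha : ∀ n : ℕ, a (n + 3) = 4 * a (n + 2) - a (n + 1)) :
    (∀ t : ℕ, (15 : ℤ) ∣ a (2 + 2 * t) + 5) ∧
    (∀ t : ℕ, 1 ≤ t → ∃ p : ℤ, 4 ≤ p ∧ 15 * (p - 2) - 5 = a (2 + 2 * t) ∧
      p = (a (2 + 2 * t) + 5) / 15 + 2) := by
  set b : ℕ → ℤ := fun n => a (n + 1) with hb_def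
  have hb : ∀ n, b (n + 2) = 4 * b (n + 1) - b n := ha
  have hab : ∀ t : ℕ, a (2 + 2 * t) = b (2 * t + 1) := fun t => by
    simp only [hb_def]; congr 1; omega
  have hdvd : ∀ t : ℕ, (15 : ℤ) ∣ a (2 + 2 * t) + 5 := fun t => by
    have hmod := modEq_neg_one_pow_mul_of_recurrence hb (m := 15) (c := 5) (by norm_num)
      (by simp [b, ha1]) (by simp [b, ha2]; decide) (2 * t + 1)
    rw [pow_succ, pow_mul] at hmod
    simpa [hab, sub_neg_eq_add] using hmod.symm.dvd
  have hge : ∀ t : ℕ, 25 ≤ a (2 + 2 * t) := fun t => by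
    have := monotone_of_recurrence hb (by simp [b, ha1]) (by simp [b, ha1, ha2])
      (show 1 ≤ 2 * t + 1 by omega)
    simpa [hab, b, ha2] using this
  refine ⟨hdvd, fun t _ => ?_⟩
  obtain ⟨c, hc⟩ := hdvd t
  have := hge t
  exact ⟨c + 2, by omega, by omega, by omega⟩
end

section
/- For the sequence ã_n defined by ã_1 = 5, ã_2 = 25, ã_n = 4ã_{n-1} - ã_{n-2}, taken modulo q(q-2) with q = 19, i.e. modulo 323, we have ã_ℓ ≡ -19 (mod 323) if and only if ℓ ≡ 58 or 78 (mod 90). -/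
def g16 : ℕ → ZMod 323 × ZMod 323
  | 0 => (5, 25)
  | n+1 => ((g16 n).2, 4 * (g16 n).2 - (g16 n).1)

set_option maxRecDepth 20000 in
lemma g16_90 : g16 90 = g16 0 := by decide

lemma g16_add_90 : ∀ n, g16 (n + 90) = g16 n
  | 0 => g16_90
  | n+1 => by
      show ((g16 (n + 90)).2, 4 * (g16 (n + 90)).2 - (g16 (n + 90)).1)
         = ((g16 n).2, 4 * (g16 n).2 - (g16 n).1)
      rw [g16_add_90 n]

lemma g16_mod (n : ℕ) : g16 n = g16 (n % 90) := by
  induction n using Nat.strong_induction_on with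
  | _ n ih =>
    rcases lt_or_ge n 90 with h | h
    · rw [Nat.mod_eq_of_lt h]
    · obtain ⟨k, rfl⟩ : ∃ k, n = k + 90 := ⟨n - 90, by omega⟩
      rw [g16_add_90, ih k (by omega), Nat.add_mod_right]

set_option maxRecDepth 20000 in
lemma g16_key : ∀ r < 90, ((g16 r).1 = -19 ↔ (r = 57 ∨ r = 77)) := by decide

theorem stmt_16 (a : ℕ → ℤ) (ha1 : a 1 = 5) (ha2 : a 2 = 25)
    (ha : ∀ n : ℕ, a (n + 3) = 4 * a (n + 2) - a (n + 1)) :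
    ∀ l : ℕ, 1 ≤ l → ((323 : ℤ) ∣ a l + 19 ↔ l % 90 = 58 ∨ l % 90 = 78) := by
  have main : ∀ n, ((a (n+1) : ZMod 323) = (g16 n).1 ∧ (a (n+2) : ZMod 323) = (g16 n).2) := by
    intro n
    induction n with
    | zero => simp [g16, ha1, ha2]
    | succ k ih =>
      refine ⟨ih.2, ?_⟩
      show ((a (k+3) : ℤ) : ZMod 323) = _
      rw [ha k]
      push_cast
      rw [ih.1, ih.2]
      simp [g16]
  intro l hl
  obtain ⟨m, rfl⟩ : ∃ m, l = m + 1 := ⟨l - 1, by omega⟩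
  have h1 : (323 : ℤ) ∣ a (m+1) + 19 ↔ ((a (m+1) + 19 : ℤ) : ZMod 323) = 0 :=
    (ZMod.intCast_zmod_eq_zero_iff_dvd _ _).symm
  rw [h1]
  push_cast
  rw [add_eq_zero_iff_eq_neg, (main m).1, g16_mod]
  rw [g16_key (m % 90) (Nat.mod_lt _ (by norm_num))]
  omega
end
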